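/- Let $V = \prod_{n \ge -1} V^{(n)}$ be a complete pre-Lie algebra over a field of characteristic 0 with $V^{(r)} \star V^{(s)} \subseteq V^{(r+s)}$, and let $V_+ = \prod_{n \ge 1} V^{(n)}$. For $v \in V_+$ define $\exp(v) = \sum_{r \ge 0} \frac{1}{r!} v^r$ where $v^{r+1} = v^r \star v$, $v^0 = \mathbf{1}$. Then $\exp$ is a bijection from $V_+^0$ onto the set of group-like elements $\mathbf{1} + V_+^0$, with inverse the pre-Lie logarithm $\log$: i.e. $\exp(\log(\mathbf{1}+w)) = \mathbf{1}+w$ and $\log(\exp(w)) = w$ for all $w \in V_+^0$. -/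

import Mathlib

/- A complete (bi)graded pre-Lie algebra over `k`, modelled concretely as the product
`V = ∏_{n ≥ -1} V^{(n)}` of its weight components: `W n d` is the component of weight `n`
and cohomological degree `d` (the components with `n < -1` play no role).  An element of
pure degree `d` is a function `v : ∀ n, W n d`; the filtration `F_m V` consists of the
elements supported in weights `≥ m`, and `V₊ = F₁V`.  Products are computed weightwise,
so all the infinite sums appearing below (`exp`, `⊙`, …) are finite in each weight and no
topology is needed: this is exactly completeness with respect to the weight filtration. -/

namespace Stmt

variable {k : Type} [Field k]
variable {W : ℤ → ℤ → Type}
variable [∀ n d, AddCommGroup (W n d)] [∀ n d, Module k (W n d)]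

/-- transport along equalities of weight and degree -/
def wc {a b d e : ℤ} (h1 : a = b) (h2 : d = e) (x : W a d) : W b e := h2 ▸ h1 ▸ x

/-- degreewise elements of the completed algebra -/
abbrev El (W : ℤ → ℤ → Type) (d : ℤ) := ∀ n : ℤ, W n d

/-- `v` lies in the filtration step `F_m` (supported in weights `≥ m`) -/
def inF (m : ℤ) {d : ℤ} (v : El W d) : Prop := ∀ n : ℤ, n < m → v n = 0

/-- degree transport -/
def dc {d e : ℤ} (h : d = e) (v : El W d) : El W e := fun n => wc rfl h (v n)

/-- the weightwise `⋆`-product of the complete pre-Lie algebra -/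
noncomputable def pstar (s : ∀ ⦃a b d e : ℤ⦄, W a d → W b e → W (a + b) (d + e)) {d e : ℤ}
    (v : El W d) (w : El W e) : El W (d + e) :=
  fun n => ∑ a ∈ Finset.Icc (-1 : ℤ) (n + 1), wc (by ring) rfl (s (v a) (w (n - a)))

/-- the `⋆`-product of two degree-0 elements -/
noncomputable def star0 (s : ∀ ⦃a b d e : ℤ⦄, W a d → W b e → W (a + b) (d + e))
    (v w : El W 0) : El W 0 :=
  dc (by ring) (pstar s v w)

/-- bilinearity of the `⋆`-product -/
def IsBilin (s : ∀ ⦃a b d e : ℤ⦄, W a d → W b e → W (a + b) (d + e)) : Prop :=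
  (∀ ⦃a b d e : ℤ⦄ (x x' : W a d) (y : W b e), s (x + x') y = s x y + s x' y) ∧
  (∀ ⦃a b d e : ℤ⦄ (x : W a d) (y y' : W b e), s x (y + y') = s x y + s x y') ∧
  (∀ ⦃a b d e : ℤ⦄ (c : k) (x : W a d) (y : W b e), s (c • x) y = c • s x y) ∧
  (∀ ⦃a b d e : ℤ⦄ (c : k) (x : W a d) (y : W b e), s x (c • y) = c • s x y)

/-- the graded (right-symmetric) pre-Lie identity for `⋆` -/
def IsPreLie (s : ∀ ⦃a b d e : ℤ⦄, W a d → W b e → W (a + b) (d + e)) : Prop :=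
  ∀ ⦃a b c d e f : ℤ⦄ (x : W a d) (y : W b e) (z : W c f),
    s x (s y z) - wc (by ring) (by ring) (s (s x y) z) =
      ((-1 : k) ^ (e * f)) •
        (wc (by ring) (by ring) (s x (s z y)) - wc (by ring) (by ring) (s (s x z) y))

/-- `one` is a left unit of weight 0 for `⋆` -/
def IsUnitEl (s : ∀ ⦃a b d e : ℤ⦄, W a d → W b e → W (a + b) (d + e))
    (one : El W 0) : Prop :=
  (∀ n : ℤ, n ≠ 0 → one n = 0) ∧
  (∀ ⦃b e : ℤ⦄ (x : W b e), wc (zero_add b) (zero_add e) (s (one 0) x) = x)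

/-- right-normed `⋆`-powers: `v⁰ = 1`, `v^{r+1} = v^r ⋆ v` -/
noncomputable def ppow (s : ∀ ⦃a b d e : ℤ⦄, W a d → W b e → W (a + b) (d + e))
    (one v : El W 0) : ℕ → El W 0
  | 0 => one
  | r + 1 => star0 s (ppow s one v r) v

/-- the pre-Lie exponential `exp(v) = ∑_r v^r / r!` (computed weightwise; for `v ∈ V₊`
only the powers `v^r` with `r ≤ n` contribute in weight `n`) -/
noncomputable def pexp (s : ∀ ⦃a b d e : ℤ⦄, W a d → W b e → W (a + b) (d + e))
    (one v : El W 0) : El W 0 :=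
  fun n => ∑ r ∈ Finset.range (n.toNat + 1), (r.factorial : k)⁻¹ • ppow s one v r n

/-- the symmetric braces of the pre-Lie algebra (Oudom–Guin), defined by the recursion
`u⟨⟩ = u`, `u⟨y, ys⟩ = u⟨ys⟩ ⋆ y − ∑ᵢ u⟨ys with (ysᵢ ⋆ y) in slot i⟩` (all arguments of
degree 0, so no signs occur) -/
noncomputable def sbrace (s : ∀ ⦃a b d e : ℤ⦄, W a d → W b e → W (a + b) (d + e)) {d : ℤ}
    (u : El W d) : List (El W 0) → El W d
  | [] => u
  | y :: ys =>
      dc (by ring) (pstar s (sbrace s u ys) y) -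
        ∑ i ∈ Finset.range ys.length,
          sbrace s u (ys.set i (star0 s (ys.getD i 0) y))
termination_by l => l.length
decreasing_by
  all_goals (simp only [List.length_set, List.length_cons]; omega)

/-- the circle product `u ⊙ (1 + v) = ∑_r u⟨v,…,v⟩_r / r!` (computed weightwise) -/
noncomputable def odotS (s : ∀ ⦃a b d e : ℤ⦄, W a d → W b e → W (a + b) (d + e)) {d : ℤ}
    (u : El W d) (v : El W 0) : El W d :=
  fun n => ∑ r ∈ Finset.range ((n + 2).toNat),
    (r.factorial : k)⁻¹ • sbrace s u (List.replicate r v) n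

/-- the differential `d_μ(v) = μ ⋆ v - (-1)^{|v|} v ⋆ μ` attached to a Maurer-Cartan
element `μ` of degree 1 -/
noncomputable def dmu (s : ∀ ⦃a b d e : ℤ⦄, W a d → W b e → W (a + b) (d + e))
    (mu : El W 1) {d : ℤ} (v : El W d) : El W (d + 1) :=
  dc (by ring) (pstar s mu v) - ((-1 : k) ^ d) • pstar s v mu

/-- `f` is an `∞`-isotopy of `(V, μ)`: a group-like element with `μ ⊙ f = f ⋆ μ` -/
def IsIsotopy (s : ∀ ⦃a b d e : ℤ⦄, W a d → W b e → W (a + b) (d + e))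
    (one : El W 0) (mu : El W 1) (f : El W 0) : Prop :=
  inF 1 (f - one) ∧ odotS (k := k) s mu (f - one) = dc (by norm_num) (pstar s f mu)

/-- homotopy of `∞`-isotopies: `f ∼_∞ g` iff `f ⊙ g⁻¹ = exp(d_μ(h))` for some `h` of
degree `-1` with `d_μ(h) ∈ V₊` (here `g'` denotes the `⊙`-inverse of `g`) -/
def HRel (s : ∀ ⦃a b d e : ℤ⦄, W a d → W b e → W (a + b) (d + e))
    (one : El W 0) (mu : El W 1) (f g : El W 0) : Prop :=
  ∃ g' : El W 0, inF 1 (g' - one) ∧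
    odotS (k := k) s g (g' - one) = one ∧ odotS (k := k) s g' (g - one) = one ∧
    ∃ h : El W (-1), inF 1 (dc (show (-1:ℤ)+1 = 0 by norm_num) (dmu (k := k) s mu h)) ∧
      odotS (k := k) s f (g' - one) =
        pexp (k := k) s one (dc (show (-1:ℤ)+1 = 0 by norm_num) (dmu (k := k) s mu h))

end Stmt

namespace Stmt

set_option linter.unusedSectionVars false
set_option maxHeartbeats 1000000

variable {k : Type} [Field k]
variable {W : ℤ → ℤ → Type}
variable [∀ n d, AddCommGroup (W n d)] [∀ n d, Module k (W n d)]

theorem wc_zero' {a b d e : ℤ} (h1 : a = b) (h2 : d = e) : (wc (W := W) h1 h2 (0 : W a d)) = 0 := by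
  subst h1; subst h2; rfl

theorem wc_el' {d : ℤ} (v : El W d) {a b : ℤ} (h : a = b) : wc h rfl (v a) = v b := by
  subst h; rfl

theorem wc_wc' {a b c d e f : ℤ} (h1 : a = b) (h2 : d = e) (h3 : b = c) (h4 : e = f) (x : W a d) :
    wc h3 h4 (wc h1 h2 x) = wc (h1.trans h3) (h2.trans h4) x := by
  subst h1; subst h2; subst h3; subst h4; rfl

theorem wc_sum' {a b d e : ℤ} (h1 : a = b) (h2 : d = e) (T : Finset ℤ) (g : ℤ → W a d) :
    wc (W := W) h1 h2 (∑ i ∈ T, g i) = ∑ i ∈ T, wc h1 h2 (g i) := by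
  subst h1; subst h2; rfl

theorem star0_apply (s : ∀ ⦃a b d e : ℤ⦄, W a d → W b e → W (a + b) (d + e))
    (u v : El W 0) (n : ℤ) :
    star0 s u v n = ∑ a ∈ Finset.Icc (-1 : ℤ) (n + 1),
      wc (by ring) (by ring) (s (u a) (v (n - a))) := by
  simp only [star0, dc]
  rw [pstar, wc_sum']
  exact Finset.sum_congr rfl fun a _ => wc_wc' _ _ _ _ _

variable {s : ∀ ⦃a b d e : ℤ⦄, W a d → W b e → W (a + b) (d + e)} {one : El W 0}
variable (hbil : IsBilin (k := k) s) (hone : IsUnitEl s one)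

include hbil in
theorem s_zero_left {a b d e : ℤ} (y : W b e) : s (0 : W a d) y = 0 := by
  have := hbil.2.2.1 (0 : k) (0 : W a d) y
  simpa using this

include hbil in
theorem s_zero_right {a b d e : ℤ} (x : W a d) : s x (0 : W b e) = 0 := by
  have := hbil.2.2.2 (0 : k) x (0 : W b e)
  simpa using this

include hbil in
theorem star0_inF {u v : El W 0} {p q : ℤ} (hu : ∀ a, a < p → u a = 0)
    (hv : ∀ b, b < q → v b = 0) : ∀ n, n < p + q → star0 s u v n = 0 := by
  intro n hn
  rw [star0_apply]
  apply Finset.sum_eq_zero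
  intro a _
  rcases lt_or_ge a p with h | h
  · rw [hu a h, s_zero_left hbil, wc_zero']
  · rw [hv (n - a) (by omega), s_zero_right hbil, wc_zero']

include hbil hone in
theorem ppow_F0 {v : El W 0} (hv : inF 1 v) :
    ∀ (r : ℕ) (n : ℤ), n < 0 → ppow s one v r n = 0 := by
  intro r
  induction r with
  | zero => intro n hn; exact hone.1 n (by omega)
  | succ r ih =>
    intro n hn
    exact star0_inF (p := 0) (q := 1) hbil ih hv n (by omega)

include hbil hone in
theorem ppow_F1 {v : El W 0} (hv : inF 1 v) :
    ∀ (r : ℕ) (n : ℤ), n < 1 → ppow s one v (r + 1) n = 0 := by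
  intro r n hn
  exact star0_inF (p := 0) (q := 1) hbil (ppow_F0 hbil hone hv r) hv n (by omega)


include hbil hone in
theorem star0_one {v : El W 0} (hv : inF 1 v) (n : ℤ) : star0 s one v n = v n := by
  rw [star0_apply]
  rw [Finset.sum_eq_single 0]
  · have h0 := hone.2 (v (n - 0))
    calc wc (by ring) (by ring) (s (one 0) (v (n - 0)))
        = wc (show n - 0 = n by ring) rfl
            (wc (zero_add (n - 0)) (zero_add 0) (s (one 0) (v (n - 0)))) := by
          rw [wc_wc']
      _ = v n := by rw [h0, wc_el']
  · intro b _ hb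
    rw [hone.1 b hb, s_zero_left hbil, wc_zero']
  · intro h
    simp only [Finset.mem_Icc] at h
    have hn : n < -1 := by omega
    have h0 := hone.2 (v (n - 0))
    calc wc (by ring) (by ring) (s (one 0) (v (n - 0)))
        = wc (show n - 0 = n by ring) rfl
            (wc (zero_add (n - 0)) (zero_add 0) (s (one 0) (v (n - 0)))) := by rw [wc_wc']
      _ = v n := by rw [h0, wc_el']
      _ = 0 := hv n (by omega)

include hbil hone in
theorem ppow_loc {v w : El W 0} (hv : inF 1 v) (hw : inF 1 w) {N : ℤ}
    (h : ∀ m, m ≤ N → v m = w m) :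
    ∀ (r : ℕ) (m : ℤ), (m ≤ N ∨ (2 ≤ r ∧ m ≤ N + 1)) →
      ppow s one v r m = ppow s one w r m := by
  intro r
  induction r with
  | zero => intro m _; rfl
  | succ r ih =>
    intro m hm
    show star0 s (ppow s one v r) v m = star0 s (ppow s one w r) w m
    rw [star0_apply, star0_apply]
    apply Finset.sum_congr rfl
    intro a _
    rcases lt_or_ge (m - a) 1 with h2 | h2
    · rw [hv (m - a) h2, hw (m - a) h2, s_zero_right hbil, s_zero_right hbil]
    · -- m - a ≥ 1, so a ≤ m - 1
      have ham : a ≤ m - 1 := by omega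
      have hmN : m ≤ N + 1 := by rcases hm with h' | h' ; omega; exact h'.2
      rcases lt_or_ge a 1 with ha | ha
      · -- a ≤ 0
        match r with
        | 0 =>
          rcases eq_or_ne a 0 with rfl | hne
          · have hmN' : m ≤ N := by
              rcases hm with h' | h'; exact h'; omega
            show wc _ _ (s (one 0) (v (m - 0))) = wc _ _ (s (one 0) (w (m - 0)))
            rw [h (m - 0) (by omega)]
          · rw [show ppow s one v 0 = one from rfl, show ppow s one w 0 = one from rfl,
              hone.1 a hne, s_zero_left hbil, s_zero_left hbil]
        | r + 1 =>
          rw [ppow_F1 hbil hone hv r a ha, ppow_F1 hbil hone hw r a ha,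
            s_zero_left hbil, s_zero_left hbil]
      · -- a ≥ 1
        rw [ih a (Or.inl (by omega)), h (m - a) (by omega)]

include hone in
theorem pexp_low {v : El W 0} {n : ℤ} (hn : n ≤ 0) : pexp (k := k) s one v n = one n := by
  have h : n.toNat = 0 := Int.toNat_of_nonpos hn
  rw [pexp, h]
  simp [ppow]

include hbil hone in
theorem pexp_key {v w : El W 0} (hv : inF 1 v) (hw : inF 1 w) {n : ℤ} (hn : 1 ≤ n)
    (h : ∀ m, m < n → v m = w m) :
    pexp (k := k) s one v n - pexp (k := k) s one w n = v n - w n := by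
  rw [pexp, pexp, ← Finset.sum_sub_distrib]
  rw [Finset.sum_eq_single 1]
  · rw [show ppow s one v 1 = star0 s one v from rfl,
      show ppow s one w 1 = star0 s one w from rfl,
      star0_one hbil hone hv, star0_one hbil hone hw]
    simp
  · intro b _ hb
    match b, hb with
    | 0, _ => simp [ppow]
    | (r+2), _ =>
      rw [ppow_loc hbil hone hv hw (N := n - 1) (fun m hm => h m (by omega)) (r+2) n
        (Or.inr ⟨by omega, by omega⟩)]
      simp
  · intro hmem
    exfalso
    apply hmem
    simp only [Finset.mem_range]
    omega

include hbil hone in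
theorem pexp_loc {v w : El W 0} (hv : inF 1 v) (hw : inF 1 w) {n : ℤ}
    (h : ∀ m, m ≤ n → v m = w m) :
    pexp (k := k) s one v n = pexp (k := k) s one w n := by
  rw [pexp, pexp]
  apply Finset.sum_congr rfl
  intro r _
  rw [ppow_loc hbil hone hv hw (N := n) h r n (Or.inl le_rfl)]

variable (s) in
noncomputable def aux (one f : El W 0) : ℕ → El W 0
  | 0 => 0
  | N + 1 => fun n =>
      if n = (N : ℤ) + 1 then
        aux one f N n + (f n - pexp (k := k) s one (aux one f N) n)
      else aux one f N n

theorem aux_F1 (f : El W 0) : ∀ N : ℕ, inF 1 (aux (k := k) s one f N) := by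
  intro N
  induction N with
  | zero => intro n _; rfl
  | succ N ih =>
    intro n hn
    show (if n = (N : ℤ) + 1 then _ else _) = 0
    rw [if_neg (by omega)]
    exact ih n hn

theorem aux_mono (f : El W 0) : ∀ (N M : ℕ), N ≤ M → ∀ m : ℤ, m ≤ (N : ℤ) →
    aux (k := k) s one f M m = aux (k := k) s one f N m := by
  intro N M hNM
  induction M, hNM using Nat.le_induction with
  | base => intro m _; rfl
  | succ M hNM ih =>
    intro m hm
    show (if m = (M : ℤ) + 1 then _ else _) = _
    rw [if_neg (by omega)]
    exact ih m hm

theorem main_bijon {k : Type} [Field k] [CharZero k]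
    {W : ℤ → ℤ → Type} [∀ n d, AddCommGroup (W n d)] [∀ n d, Module k (W n d)]
    (s : ∀ ⦃a b d e : ℤ⦄, W a d → W b e → W (a + b) (d + e))
    (one : El W 0)
    (hbil : IsBilin (k := k) s)
    (hone : IsUnitEl s one) :
    Set.BijOn (fun v => pexp (k := k) s one v)
      {v : El W 0 | inF 1 v} {f : El W 0 | inF 1 (f - one)} := by
  refine ⟨?_, ?_, ?_⟩
  · -- MapsTo
    intro v hv n hn
    show pexp (k := k) s one v n - one n = 0
    rw [pexp_low hone (by omega), sub_self]
  · -- InjOn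
    intro v hv w hw heq
    simp only [Set.mem_setOf_eq] at hv hw
    have H : ∀ (N : ℕ) (n : ℤ), n ≤ (N : ℤ) → v n = w n := by
      intro N
      induction N with
      | zero => intro n hn; rw [hv n (by omega), hw n (by omega)]
      | succ N ih =>
        intro n hn
        rcases lt_or_ge n ((N : ℤ) + 1) with h | h
        · exact ih n (by omega)
        · have hn' : n = (N : ℤ) + 1 := by omega
          have key := pexp_key hbil hone hv hw (n := n) (by omega)
            (fun m hm => ih m (by omega))
          have : pexp (k := k) s one v n = pexp (k := k) s one w n := congrFun heq n
          rw [this, sub_self] at key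
          exact sub_eq_zero.mp key.symm
    funext n
    have h1 : n ≤ (n.toNat : ℤ) := Int.self_le_toNat n
    exact H n.toNat n h1
  · -- SurjOn
    intro f hf
    simp only [Set.mem_setOf_eq] at hf
    set v : El W 0 := fun n => aux (k := k) s one f n.toNat n with hv_def
    have hvF : inF 1 v := fun n hn => aux_F1 f n.toNat n hn
    have hagree : ∀ (N : ℕ) (m : ℤ), m ≤ (N : ℤ) → v m = aux (k := k) s one f N m := by
      intro N m hm
      show aux (k := k) s one f m.toNat m = _
      rcases le_or_gt m.toNat N with h | h
      · rw [aux_mono f m.toNat N h m (Int.self_le_toNat m)]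
      · rw [aux_mono f N m.toNat (by omega) m hm]
    refine ⟨v, hvF, ?_⟩
    funext n
    show pexp (k := k) s one v n = f n
    rcases le_or_gt n 0 with hn | hn
    · rw [pexp_low hone hn]
      have := hf n (by omega)
      have : f n - one n = 0 := this
      exact (sub_eq_zero.mp this).symm
    · -- n ≥ 1
      obtain ⟨N, hN⟩ : ∃ N : ℕ, n = (N : ℤ) + 1 := ⟨(n - 1).toNat, by omega⟩
      have h1 : pexp (k := k) s one v n = pexp (k := k) s one (aux (k := k) s one f (N + 1)) n :=
        pexp_loc hbil hone hvF (aux_F1 f (N + 1))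
          (fun m hm => hagree (N + 1) m (by omega))
      have h2 : ∀ m : ℤ, m < n → aux (k := k) s one f (N + 1) m = aux (k := k) s one f N m :=
        fun m hm => aux_mono f N (N + 1) (by omega) m (by omega)
      have key := pexp_key hbil hone (aux_F1 f (N + 1)) (aux_F1 f N) (n := n) (by omega) h2
      have h3 : aux (k := k) s one f (N + 1) n =
          aux (k := k) s one f N n + (f n - pexp (k := k) s one (aux (k := k) s one f N) n) := by
        show (if n = (N : ℤ) + 1 then _ else _) = _
        rw [if_pos hN]
      rw [h3] at key
      rw [add_sub_cancel_left] at key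
      rw [h1, sub_left_inj.mp key]



/-- Let `V = ∏_{n ≥ -1} V^{(n)}` be a complete pre-Lie algebra over a
field of characteristic 0.  The exponential `exp(v) = ∑_r v^r / r!` is a bijection from
`V₊⁰` (the degree-0 part of `F₁V`) onto the set of group-like elements `1 + V₊⁰`; its
inverse is the pre-Lie logarithm (which is exactly the statement that every group-like
element has a unique logarithm in `V₊⁰`). -/
theorem stmt_4 {k : Type} [Field k] [CharZero k]
    {W : ℤ → ℤ → Type} [∀ n d, AddCommGroup (W n d)] [∀ n d, Module k (W n d)]
    (s : ∀ ⦃a b d e : ℤ⦄, W a d → W b e → W (a + b) (d + e))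
    (one : El W 0)
    (hbil : IsBilin (k := k) s) (hpre : IsPreLie (k := k) s)
    (hone : IsUnitEl s one) :
    Set.BijOn (fun v => pexp (k := k) s one v)
      {v : El W 0 | inF 1 v} {f : El W 0 | inF 1 (f - one)} := by
  exact main_bijon s one hbil hone

end Stmt
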